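/- Let (X,d,μ) be a metric measure space of non-homogeneous type, p ∈ (1,∞), r ∈ (1,p) and η ∈ [5,∞). Then the maximal operator M_{r,(η)} is bounded on L^p(μ): there exists a positive constant C such that ‖M_{r,(η)} f‖_{L^p(μ)} ≤ C ‖f‖_{L^p(μ)} for all f ∈ L^p(μ). -/

import Mathlib

open MeasureTheory Metric ENNReal Filter

noncomputable section

/-- A metric measure space of non-homogeneous type: `(X,d,μ)` is geometrically doubling
and upper doubling with dominating function `lam`. -/
structure NonHomSpace (X : Type*) [MetricSpace X] [MeasurableSpace X]
    (μ : MeasureTheory.Measure X) where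
  lam : X → ℝ → ℝ
  Clam : ℝ
  N₀ : ℕ
  Clam_gt : 1 < Clam
  lam_pos : ∀ x r, 0 < r → 0 < lam x r
  lam_mono : ∀ x r₁ r₂, 0 < r₁ → r₁ ≤ r₂ → lam x r₁ ≤ lam x r₂
  measure_ball_le : ∀ x r, 0 < r → μ (ball x r) ≤ ENNReal.ofReal (lam x r)
  lam_half : ∀ x r, 0 < r → lam x r ≤ Clam * lam x (r / 2)
  lam_comp : ∀ x y r, 0 < r → dist x y ≤ r → lam x r ≤ Clam * lam y r
  geom : ∀ (x : X) (r : ℝ), 0 < r → ∃ s : Finset X, s.card ≤ N₀ ∧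
    ball x r ⊆ ⋃ y ∈ s, ball y (r / 2)

variable {X : Type*} [MetricSpace X] [MeasurableSpace X] [BorelSpace X]

/-- The discrete coefficient `K̃^{(ρ)}_{B,S}` for balls `B = B(cB,rB) ⊆ S` with radius `rS`. -/
def Ktilde (μ : Measure X) (lam : X → ℝ → ℝ) (ρ : ℝ) (cB : X) (rB rS : ℝ) : ℝ :=
  1 + ∑ k ∈ Finset.Icc (-(⌊Real.logb ρ 2⌋)) ⌈Real.logb ρ (rS / rB)⌉,
      (μ (ball cB (ρ ^ k * rB))).toReal / lam cB (ρ ^ k * rB)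

/-- `f` satisfies the `R̃BMO_{ρ,γ}(μ)` conditions with family of numbers `fB` and constant `C`. -/
def IsRBMOWith (μ : Measure X) (lam : X → ℝ → ℝ) (ρ γ : ℝ) (f : X → ℝ)
    (fB : X → ℝ → ℝ) (C : ℝ) : Prop :=
  (∀ c r, 0 < r →
    ∫ x in ball c r, |f x - fB c r| ∂μ ≤ C * (μ (ball c (ρ * r))).toReal) ∧
  (∀ c r c' r', 0 < r → 0 < r' → ball c r ⊆ ball c' r' →
    |fB c r - fB c' r'| ≤ C * Ktilde μ lam ρ c r r' ^ γ)

/-- Membership in `R̃BMO_{ρ,γ}(μ)`. -/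
def MemRBMO (μ : Measure X) (lam : X → ℝ → ℝ) (ρ γ : ℝ) (f : X → ℝ) : Prop :=
  ∃ C : ℝ, 0 ≤ C ∧ ∃ fB : X → ℝ → ℝ, IsRBMOWith μ lam ρ γ f fB C

/-- The `R̃BMO_{ρ,γ}(μ)` norm. -/
def rbmoNorm (μ : Measure X) (lam : X → ℝ → ℝ) (ρ γ : ℝ) (f : X → ℝ) : ℝ :=
  sInf {C : ℝ | 0 ≤ C ∧ ∃ fB : X → ℝ → ℝ, IsRBMOWith μ lam ρ γ f fB C}

/-- A `(2,1,2)_λ`-atomic block `h` with `|h| = A`. -/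
def IsAtomicBlock (μ : Measure X) (lam : X → ℝ → ℝ) (h : X → ℝ) (A : ℝ) : Prop :=
  ∃ (cB c₁ c₂ : X) (rB r₁ r₂ l₁ l₂ : ℝ) (a₁ a₂ : X → ℝ),
    0 < rB ∧ 0 < r₁ ∧ 0 < r₂ ∧
    Integrable h μ ∧
    Function.support h ⊆ ball cB rB ∧
    (∫ x, h x ∂μ) = 0 ∧
    (∀ x, h x = l₁ * a₁ x + l₂ * a₂ x) ∧
    Function.support a₁ ⊆ ball c₁ r₁ ∧ ball c₁ r₁ ⊆ ball cB rB ∧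
    Function.support a₂ ⊆ ball c₂ r₂ ∧ ball c₂ r₂ ⊆ ball cB rB ∧
    eLpNorm a₁ 2 μ ≤ ENNReal.ofReal
      ((μ (ball c₁ (2 * r₁))).toReal ^ (-(1/2 : ℝ)) * (Ktilde μ lam 2 c₁ r₁ rB)⁻¹) ∧
    eLpNorm a₂ 2 μ ≤ ENNReal.ofReal
      ((μ (ball c₂ (2 * r₂))).toReal ^ (-(1/2 : ℝ)) * (Ktilde μ lam 2 c₂ r₂ rB)⁻¹) ∧
    A = |l₁| + |l₂|

/-- Membership in the atomic Hardy space `H̃¹(μ)`. -/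
def MemH1 (μ : Measure X) (lam : X → ℝ → ℝ) (f : X → ℝ) : Prop :=
  Integrable f μ ∧
  ∃ (h : ℕ → X → ℝ) (A : ℕ → ℝ),
    (∀ i, IsAtomicBlock μ lam (h i) (A i)) ∧ Summable A ∧
    Tendsto (fun n => eLpNorm (fun x => f x - ∑ i ∈ Finset.range n, h i x) 1 μ)
      atTop (nhds 0)

/-- The `H̃¹(μ)` norm. -/
def H1Norm (μ : Measure X) (lam : X → ℝ → ℝ) (f : X → ℝ) : ℝ :=
  sInf {s : ℝ | ∃ (h : ℕ → X → ℝ) (A : ℕ → ℝ),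
    (∀ i, IsAtomicBlock μ lam (h i) (A i)) ∧ Summable A ∧
    Tendsto (fun n => eLpNorm (fun x => f x - ∑ i ∈ Finset.range n, h i x) 1 μ)
      atTop (nhds 0) ∧ s = ∑' i, A i}

/-- `L^∞_b(μ)`: bounded functions with bounded support. -/
def MemLinftyB (μ : Measure X) (f : X → ℝ) : Prop :=
  MemLp f ⊤ μ ∧ Bornology.IsBounded (Function.support f)

/-- `β_ρ`. -/
def betaRho (Clam : ℝ) (N₀ : ℕ) (ρ : ℝ) : ℝ :=
  ρ ^ (3 * max (Real.logb 2 (N₀ : ℝ)) (Real.logb 2 Clam)) +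
    max (5 * ρ) 30 ^ Real.logb 2 (N₀ : ℝ) + max (3 * ρ) 30 ^ Real.logb 2 Clam

/-- The ball `B(c, α r)` is `(α,β)`-doubling. -/
def IsDoubling (μ : Measure X) (α β : ℝ) (c : X) (r : ℝ) : Prop :=
  μ (ball c (α * r)) ≤ ENNReal.ofReal β * μ (ball c r)

/-- smallest `j` with `α^j B` `(α,β)`-doubling. -/
def doublingIdx (μ : Measure X) (α β : ℝ) (c : X) (r : ℝ) : ℕ :=
  sInf {j : ℕ | IsDoubling μ α β c (α ^ j * r)}

/-- radius of `B̃^α`, the smallest `(α,β)`-doubling ball of the form `α^j B`. -/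
def tildeRad (μ : Measure X) (α β : ℝ) (c : X) (r : ℝ) : ℝ :=
  α ^ doublingIdx μ α β c r * r

/-- mean of `f` over `E`. -/
def mAvg (μ : Measure X) (E : Set X) (f : X → ℝ) : ℝ :=
  (∫ y in E, f y ∂μ) / (μ E).toReal

/-- the sharp maximal function `M^♯ f`. -/
def sharpMax (μ : Measure X) (lam : X → ℝ → ℝ) (β : ℝ) (f : X → ℝ) (x : X) : ℝ≥0∞ :=
  (⨆ (c : X) (r : ℝ) (_ : 0 < r) (_ : x ∈ ball c r),
    (∫⁻ y in ball c r,
        ENNReal.ofReal |f y - mAvg μ (ball c (tildeRad μ 6 β c r)) f| ∂μ) /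
      μ (ball c (6 * r))) +
  ⨆ (c : X) (r : ℝ) (c' : X) (r' : ℝ) (_ : 0 < r) (_ : 0 < r')
      (_ : x ∈ ball c r) (_ : ball c r ⊆ ball c' r')
      (_ : IsDoubling μ 6 β c r) (_ : IsDoubling μ 6 β c' r'),
    ENNReal.ofReal (|mAvg μ (ball c r) f - mAvg μ (ball c' r') f| /
      Ktilde μ lam 6 c r r')

/-- the non-centered doubling maximal operator `N`. -/
def NMax (μ : Measure X) (β : ℝ) (f : X → ℝ) (x : X) : ℝ≥0∞ :=
  ⨆ (c : X) (r : ℝ) (_ : 0 < r) (_ : x ∈ ball c r) (_ : IsDoubling μ 6 β c r),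
    (∫⁻ y in ball c r, ENNReal.ofReal |f y| ∂μ) / μ (ball c r)

/-- the maximal operator `M_{r,(η)}`. -/
def Mmax (μ : Measure X) (r η : ℝ) (f : X → ℝ) (x : X) : ℝ≥0∞ :=
  ⨆ (c : X) (rad : ℝ) (_ : 0 < rad) (_ : x ∈ ball c rad),
    ((∫⁻ y in ball c rad, ENNReal.ofReal (|f y| ^ r) ∂μ) / μ (ball c (η * rad))) ^ (1 / r)

/-- the weak `L^p` quasinorm of an `ℝ≥0∞`-valued function. -/
def wNorm (μ : Measure X) (p : ℝ) (g : X → ℝ≥0∞) : ℝ≥0∞ :=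
  ⨆ (t : ℝ) (_ : 0 < t), ENNReal.ofReal t * μ {x | ENNReal.ofReal t < g x} ^ (1 / p)

/-- the maximal Calderón–Zygmund operator `T_*`. -/
def Tstar (μ : Measure X) (K : X → X → ℝ) (f : X → ℝ) (x : X) : ℝ≥0∞ :=
  ⨆ (ε : ℝ) (_ : 0 < ε),
    ENNReal.ofReal |∫ y in {y | ε < dist x y}, K x y * f y ∂μ|

end

section AuxStatement17
open Set
set_option linter.unusedSectionVars false
noncomputable section

variable {X : Type*} [MetricSpace X] [MeasurableSpace X] [BorelSpace X]

noncomputable def MRaux (μ ν : Measure X) (η : ℝ) (x : X) : ℝ≥0∞ :=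
  ⨆ (c : X) (rad : ℝ) (_ : 0 < rad) (_ : x ∈ ball c rad),
    ν (ball c rad) / μ (ball c (η * rad))

lemma MRaux_lt_iff {μ ν : Measure X} {η : ℝ} {x : X} {t : ℝ≥0∞} :
    t < MRaux μ ν η x ↔ ∃ c rad, 0 < rad ∧ x ∈ ball c rad ∧
      t < ν (ball c rad) / μ (ball c (η * rad)) := by
  simp only [MRaux, lt_iSup_iff, mem_ball]
  tauto

lemma MRaux_trunc (μ : Measure X) (g : X → ℝ≥0∞) {η : ℝ} (hη : 1 ≤ η) (t : ℝ≥0∞) (x : X) :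
    MRaux μ (μ.withDensity g) η x ≤
      t + MRaux μ (μ.withDensity fun y => if t < g y then g y else 0) η x := by
  refine iSup_le fun c => iSup_le fun rad => iSup_le fun hrad => iSup_le fun hx => ?_
  set gt : X → ℝ≥0∞ := fun y => if t < g y then g y else 0 with hgt
  have hball : ball c rad ⊆ ball c (η * rad) :=
    ball_subset_ball (by nlinarith)
  have h1 : (μ.withDensity g) (ball c rad) ≤
      t * μ (ball c rad) + (μ.withDensity gt) (ball c rad) := by
    rw [withDensity_apply _ measurableSet_ball, withDensity_apply _ measurableSet_ball]
    have hle : ∀ y, g y ≤ t + gt y := by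
      intro y
      simp only [hgt]
      split_ifs with h
      · exact le_add_self
      · push_neg at h; simpa using h
    calc ∫⁻ y in ball c rad, g y ∂μ ≤ ∫⁻ y in ball c rad, (t + gt y) ∂μ :=
          lintegral_mono hle
      _ = t * μ (ball c rad) + ∫⁻ y in ball c rad, gt y ∂μ := by
          rw [lintegral_add_left measurable_const, setLIntegral_const]
  calc (μ.withDensity g) (ball c rad) / μ (ball c (η * rad))
      ≤ (t * μ (ball c rad) + (μ.withDensity gt) (ball c rad)) / μ (ball c (η * rad)) :=
        ENNReal.div_le_div_right h1 _
    _ = t * μ (ball c rad) / μ (ball c (η * rad)) +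
        (μ.withDensity gt) (ball c rad) / μ (ball c (η * rad)) :=
        ENNReal.div_add_div_same.symm
    _ ≤ t + MRaux μ (μ.withDensity gt) η x := by
        gcongr
        · exact ENNReal.div_le_of_le_mul (mul_le_mul_right (measure_mono hball) t)
        · refine le_trans ?_ (le_iSup _ c)
          refine le_trans ?_ (le_iSup _ rad)
          rw [iSup_pos hrad, iSup_pos hx]

lemma measurable_MRaux (μ ν : Measure X) (η : ℝ) : Measurable (MRaux μ ν η) := by
  apply measurable_of_Ioi
  intro t
  have : MRaux μ ν η ⁻¹' Set.Ioi t = ⋃ (p : X × ℝ) (_ : 0 < p.2 ∧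
      t < ν (ball p.1 p.2) / μ (ball p.1 (η * p.2))), ball p.1 p.2 := by
    ext x
    simp only [Set.mem_preimage, Set.mem_Ioi, MRaux_lt_iff, Set.mem_iUnion]
    constructor
    · rintro ⟨c, rad, hrad, hx, hlt⟩; exact ⟨⟨c, rad⟩, ⟨hrad, hlt⟩, hx⟩
    · rintro ⟨⟨c, rad⟩, ⟨hrad, hlt⟩, hx⟩; exact ⟨c, rad, hrad, hx, hlt⟩
  rw [this]
  exact (isOpen_iUnion fun p => isOpen_iUnion fun _ => isOpen_ball).measurableSet

lemma iSup_rpow_aux {ι : Sort*} (f : ι → ℝ≥0∞) {s : ℝ} (hs : 0 < s) :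
    (⨆ i, f i) ^ s = ⨆ i, f i ^ s := by
  apply le_antisymm
  · have h1 : (⨆ i, f i) ≤ (⨆ i, f i ^ s) ^ (1 / s) := by
      refine iSup_le fun i => ?_
      have : f i = (f i ^ s) ^ (1 / s) := by
        rw [← ENNReal.rpow_mul, mul_one_div, div_self hs.ne', ENNReal.rpow_one]
      rw [this]
      exact ENNReal.rpow_le_rpow (le_iSup (fun i => f i ^ s) i) (by positivity)
    calc (⨆ i, f i) ^ s ≤ ((⨆ i, f i ^ s) ^ (1 / s)) ^ s := ENNReal.rpow_le_rpow h1 hs.le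
      _ = ⨆ i, f i ^ s := by
        rw [← ENNReal.rpow_mul, one_div, inv_mul_cancel₀ hs.ne', ENNReal.rpow_one]
  · exact iSup_le fun i => ENNReal.rpow_le_rpow (le_iSup f i) hs.le

lemma zpow_rpow_aux {q : ℝ} (j : ℤ) : ((2 : ℝ≥0∞) ^ j) ^ (q - 1) = ((2 : ℝ≥0∞) ^ (q - 1)) ^ j := by
  rw [← ENNReal.rpow_intCast 2 j, ← ENNReal.rpow_mul, ← ENNReal.rpow_intCast (2 ^ (q-1) : ℝ≥0∞) j,
    ← ENNReal.rpow_mul, mul_comm]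

lemma geom_sum_bound_aux {q : ℝ} (hq : 1 < q) (c : ℝ≥0∞) :
    ∑' j : ℤ, ((2 : ℝ≥0∞) ^ j) ^ (q - 1) * (if (2 : ℝ≥0∞) ^ j < c then c else 0) ≤
      (1 - ((2 : ℝ≥0∞) ^ (q - 1))⁻¹)⁻¹ * c ^ q := by
  set a : ℝ≥0∞ := (2 : ℝ≥0∞) ^ (q - 1) with ha
  have ha1 : 1 < a := by
    rw [ha]
    exact ENNReal.one_lt_rpow one_lt_two (by linarith)
  have ha0 : a ≠ 0 := by positivity
  have hat : a ≠ ⊤ := by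
    rw [ha]; exact ENNReal.rpow_ne_top_of_nonneg (by linarith) (by norm_num)
  have hK0 : (1 - a⁻¹)⁻¹ ≠ 0 := by
    simp only [ne_eq, ENNReal.inv_eq_zero]
    exact ne_top_of_le_ne_top one_ne_top tsub_le_self
  rcases eq_or_ne c 0 with rfl | hc0
  · simp
  rcases eq_or_ne c ⊤ with rfl | hctop
  · rw [ENNReal.top_rpow_of_pos (by linarith), ENNReal.mul_top hK0]
    exact le_top
  obtain ⟨J, hJ⟩ := ENNReal.exists_mem_Ico_zpow hc0 hctop one_lt_two (by norm_num)
  obtain ⟨hJ1, hJ2⟩ := hJ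
  have hstep : ∀ j : ℤ, ((2 : ℝ≥0∞) ^ j) ^ (q - 1) * (if (2 : ℝ≥0∞) ^ j < c then c else 0) ≤
      (fun j : ℤ => if j ≤ J then a ^ j * c else 0) j := by
    intro j
    split_ifs with h
    · have hjJ : j ≤ J := by
        by_contra hcon
        push_neg at hcon
        have : (2 : ℝ≥0∞) ^ (J + 1) ≤ 2 ^ j := ENNReal.zpow_le_of_le one_le_two hcon
        exact absurd (h.trans hJ2) (not_lt.mpr this)
      show ((2:ℝ≥0∞) ^ j) ^ (q - 1) * c ≤ if j ≤ J then a ^ j * c else 0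
      rw [if_pos hjJ, zpow_rpow_aux]
    · simp
  refine le_trans (ENNReal.tsum_le_tsum hstep) ?_
  have hinj : Function.Injective fun n : ℕ => J - (n : ℤ) := by
    intro m n hmn; simpa using hmn
  have hsupp : Function.support (fun j : ℤ => if j ≤ J then a ^ j * c else 0) ⊆
      Set.range fun n : ℕ => J - (n : ℤ) := by
    intro j hj
    simp only [Function.mem_support, ne_eq, ite_eq_right_iff, not_forall] at hj
    obtain ⟨hjJ, -⟩ := hj
    exact ⟨(J - j).toNat, by simp [Int.toNat_of_nonneg (by omega : (0:ℤ) ≤ J - j)]⟩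
  rw [← Function.Injective.tsum_eq hinj hsupp]
  have hval : ∀ n : ℕ, (fun j : ℤ => if j ≤ J then a ^ j * c else 0) (J - (n : ℤ)) =
      a ^ J * (a⁻¹) ^ n * c := by
    intro n
    show (if J - (n:ℤ) ≤ J then a ^ (J - (n:ℤ)) * c else 0) = a ^ J * a⁻¹ ^ n * c
    rw [if_pos (by omega : J - (n:ℤ) ≤ J)]
    congr 1
    have h1 : a ^ (J - (n : ℤ)) * a ^ (n : ℤ) = a ^ J := by
      rw [← ENNReal.zpow_add ha0 hat, sub_add_cancel]
    have h2 : a ^ (n : ℤ) = a ^ n := zpow_natCast a n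
    have h3 : a ^ (J - (n : ℤ)) = a ^ J * (a ^ n)⁻¹ := by
      rw [← h1, h2, mul_assoc, ENNReal.mul_inv_cancel (pow_ne_zero n ha0)
        (pow_ne_top hat), mul_one]
    rw [h3, ENNReal.inv_pow]
  calc ∑' n : ℕ, (fun j : ℤ => if j ≤ J then a ^ j * c else 0) (J - (n : ℤ))
      = ∑' n : ℕ, a ^ J * (a⁻¹) ^ n * c := by exact tsum_congr hval
    _ = a ^ J * c * ∑' n : ℕ, (a⁻¹) ^ n := by
        rw [← ENNReal.tsum_mul_left]
        congr 1; ext n; ring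
    _ = a ^ J * c * (1 - a⁻¹)⁻¹ := by rw [ENNReal.tsum_geometric]
    _ ≤ c ^ (q - 1) * c * (1 - a⁻¹)⁻¹ := by
        gcongr
        calc a ^ J = ((2 : ℝ≥0∞) ^ J) ^ (q - 1) := (zpow_rpow_aux J).symm
          _ ≤ c ^ (q - 1) := ENNReal.rpow_le_rpow hJ1 (by linarith)
    _ = (1 - a⁻¹)⁻¹ * c ^ q := by
        have hcc : c ^ (q - 1) * c = c ^ q := by
          have h := ENNReal.rpow_add (q - 1) 1 hc0 hctop
          rw [ENNReal.rpow_one] at h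
          rw [← h]; norm_num
        rw [hcc, mul_comm]

lemma weak_aux (μ ν : Measure X) {η : ℝ} (hη : 5 ≤ η) {t : ℝ≥0∞} (ht : t ≠ 0) :
    μ {x | t < MRaux μ ν η x} ≤ ν Set.univ / t := by
  rcases eq_or_ne t ⊤ with rfl | htop
  · simp [not_top_lt]
  by_cases hν : ν Set.univ = ⊤
  · rw [hν, ENNReal.top_div_of_ne_top htop]; exact le_top
  -- the sets with radius bound
  set T : ℕ → Set (X × ℝ) := fun n =>
    {p | 0 < p.2 ∧ p.2 ≤ (n : ℝ) ∧ t < ν (ball p.1 p.2) / μ (ball p.1 (η * p.2))} with hT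
  set E : ℕ → Set X := fun n => ⋃ p ∈ T n, ball p.1 p.2 with hE
  have hset : {x | t < MRaux μ ν η x} = ⋃ n, E n := by
    ext x
    simp only [Set.mem_setOf_eq, MRaux_lt_iff, hE, Set.mem_iUnion, hT, Set.mem_setOf_eq]
    constructor
    · rintro ⟨c, rad, hrad, hx, hlt⟩
      exact ⟨⌈rad⌉₊, ⟨c, rad⟩, ⟨hrad, Nat.le_ceil rad, hlt⟩, hx⟩
    · rintro ⟨n, ⟨c, rad⟩, ⟨hrad, -, hlt⟩, hx⟩
      exact ⟨c, rad, hrad, hx, hlt⟩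
  have hmono : Monotone E := by
    intro n m hnm
    apply Set.iUnion₂_mono'
    intro p hp
    exact ⟨p, ⟨hp.1, hp.2.1.trans (by exact_mod_cast hnm), hp.2.2⟩, subset_rfl⟩
  rw [hset, hmono.measure_iUnion]
  apply iSup_le
  intro n
  -- Vitali covering
  obtain ⟨u, huT, hdisj, hcov⟩ :=
    Vitali.exists_disjoint_subfamily_covering_enlargement_closedBall (T n) Prod.fst Prod.snd
      (n : ℝ) (fun p hp => hp.2.1) 4 (by norm_num)
  -- positivity of ν on the balls of the family
  have hpos : ∀ p ∈ u, 0 < ν (ball p.1 p.2) := by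
    intro p hp
    rcases (huT hp).2.2 with hlt
    by_contra h
    push_neg at h
    have h0 : ν (ball p.1 p.2) = 0 := le_antisymm h (zero_le ..)
    rw [h0, ENNReal.zero_div] at hlt
    exact (ht (le_antisymm (le_of_lt hlt) (zero_le ..))).elim
  -- countability
  have hcount : u.Countable := by
    have hdisj' : Pairwise (Function.onFun Disjoint fun p : u => ball (p : X × ℝ).1 (p : X × ℝ).2) := by
      intro a b hab
      have := hdisj a.2 b.2 (Subtype.coe_injective.ne hab)
      exact Disjoint.mono ball_subset_closedBall ball_subset_closedBall this
    have := Measure.countable_meas_pos_of_disjoint_of_meas_iUnion_ne_top ν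
      (As := fun p : u => ball (p : X × ℝ).1 (p : X × ℝ).2)
      (fun _ => measurableSet_ball) hdisj'
      (by
        refine ne_top_of_le_ne_top hν (measure_mono (Set.subset_univ _)))
    have huniv : {i : u | 0 < ν (ball (i : X × ℝ).1 (i : X × ℝ).2)} = Set.univ := by
      ext i; simpa using hpos i i.2
    rw [huniv] at this
    rw [← Set.countable_coe_iff]
    exact Set.countable_univ_iff.mp this
  -- covering of E n by the enlarged balls
  have hEsub : E n ⊆ ⋃ p ∈ u, ball p.1 (η * p.2) := by
    intro x hx
    simp only [hE, Set.mem_iUnion] at hx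
    obtain ⟨p, hpT, hxp⟩ := hx
    obtain ⟨b, hbu, hsub⟩ := hcov p hpT
    have hb2 : 0 < b.2 := (huT hbu).1
    have : x ∈ closedBall b.1 (4 * b.2) := hsub (ball_subset_closedBall hxp)
    have : x ∈ ball b.1 (η * b.2) := by
      refine closedBall_subset_ball ?_ this
      nlinarith
    exact Set.mem_iUnion₂.mpr ⟨b, hbu, this⟩
  calc μ (E n) ≤ μ (⋃ p ∈ u, ball p.1 (η * p.2)) := measure_mono hEsub
    _ ≤ ∑' p : u, μ (ball (p : X × ℝ).1 (η * (p : X × ℝ).2)) := measure_biUnion_le μ hcount _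
    _ ≤ ∑' p : u, ν (ball (p : X × ℝ).1 (p : X × ℝ).2) / t := by
        apply ENNReal.tsum_le_tsum
        intro p
        have hlt := (huT p.2).2.2
        rw [ENNReal.le_div_iff_mul_le (Or.inl ht) (Or.inl htop)]
        calc μ (ball (p : X × ℝ).1 (η * (p : X × ℝ).2)) * t
            ≤ μ (ball (p : X × ℝ).1 (η * (p : X × ℝ).2)) *
              (ν (ball (p : X × ℝ).1 (p : X × ℝ).2) / μ (ball (p : X × ℝ).1 (η * (p : X × ℝ).2))) :=
              mul_le_mul_right hlt.le _
          _ ≤ ν (ball (p : X × ℝ).1 (p : X × ℝ).2) := ENNReal.mul_div_le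
    _ = (∑' p : u, ν (ball (p : X × ℝ).1 (p : X × ℝ).2)) / t := by
        simp_rw [div_eq_mul_inv]; exact ENNReal.tsum_mul_right
    _ ≤ ν Set.univ / t := by
        apply ENNReal.div_le_div_right
        have : Countable u := Set.countable_coe_iff.mpr hcount
        rw [← measure_iUnion ?_ (fun _ => measurableSet_ball)]
        · exact measure_mono (Set.subset_univ _)
        · intro a b hab
          exact Disjoint.mono ball_subset_closedBall ball_subset_closedBall
            (hdisj a.2 b.2 (Subtype.coe_injective.ne hab))

lemma weak_trunc_aux (μ : Measure X) {η : ℝ} (hη : 5 ≤ η) (g : X → ℝ≥0∞)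
    {t : ℝ≥0∞} (ht : t ≠ 0) (htop : t ≠ ⊤) :
    μ {x | 2 * t < MRaux μ (μ.withDensity g) η x} ≤
      (∫⁻ y, (if t < g y then g y else 0) ∂μ) / t := by
  have hsub : {x | 2 * t < MRaux μ (μ.withDensity g) η x} ⊆
      {x | t < MRaux μ (μ.withDensity fun y => if t < g y then g y else 0) η x} := by
    intro x hx
    simp only [Set.mem_setOf_eq] at hx ⊢
    have h1 := MRaux_trunc μ g (by linarith : (1:ℝ) ≤ η) t x
    have h2 : t + t < t + MRaux μ (μ.withDensity fun y => if t < g y then g y else 0) η x := by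
      calc t + t = 2 * t := (two_mul t).symm
        _ < MRaux μ (μ.withDensity g) η x := hx
        _ ≤ _ := h1
    exact (ENNReal.add_lt_add_iff_left htop).mp h2
  calc μ {x | 2 * t < MRaux μ (μ.withDensity g) η x} ≤
      μ {x | t < MRaux μ (μ.withDensity fun y => if t < g y then g y else 0) η x} :=
        measure_mono hsub
    _ ≤ (μ.withDensity fun y => if t < g y then g y else 0) Set.univ / t :=
        weak_aux μ _ hη ht
    _ = (∫⁻ y, (if t < g y then g y else 0) ∂μ) / t := by
        rw [withDensity_apply _ MeasurableSet.univ, setLIntegral_univ]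

lemma strong_aux (μ : Measure X) {η q : ℝ} (hη : 5 ≤ η) (hq : 1 < q)
    (g : X → ℝ≥0∞) (hg : Measurable g) (hfin : ∫⁻ x, g x ^ q ∂μ ≠ ⊤) :
    ∫⁻ x, MRaux μ (μ.withDensity g) η x ^ q ∂μ ≤
      (2 : ℝ≥0∞) ^ (3 * q) * (1 - ((2 : ℝ≥0∞) ^ (q - 1))⁻¹)⁻¹ * ∫⁻ x, g x ^ q ∂μ := by
  set A := MRaux μ (μ.withDensity g) η with hA
  have hAmeas : Measurable A := measurable_MRaux μ _ η
  set I := ∫⁻ x, g x ^ q ∂μ with hI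
  -- tail integrals
  have htail : ∀ j : ℤ, ∫⁻ y, (if (2:ℝ≥0∞) ^ j < g y then g y else 0) ∂μ ≤
      ((2:ℝ≥0∞) ^ j) ^ (1 - q) * I := by
    intro j
    have hne0 : ((2:ℝ≥0∞) ^ j) ≠ 0 := (ENNReal.zpow_pos two_ne_zero ENNReal.ofNat_ne_top j).ne'
    have hnetop : ((2:ℝ≥0∞) ^ j) ≠ ⊤ := (ENNReal.zpow_lt_top two_ne_zero ENNReal.ofNat_ne_top j).ne
    rw [hI, ← lintegral_const_mul _ (hg.pow_const q)]
    apply lintegral_mono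
    intro y
    show (if (2:ℝ≥0∞) ^ j < g y then g y else 0) ≤ ((2:ℝ≥0∞) ^ j) ^ (1 - q) * g y ^ q
    split_ifs with h
    · have h1 : g y = ((2:ℝ≥0∞) ^ j) ^ (1 - q) * (((2:ℝ≥0∞) ^ j) ^ (q - 1) * g y) := by
        rw [← mul_assoc, ← ENNReal.rpow_add _ _ hne0 hnetop]
        norm_num
      refine h1.trans_le (mul_le_mul_right ?_ _)
      calc ((2:ℝ≥0∞) ^ j) ^ (q - 1) * g y ≤ g y ^ (q - 1) * g y :=
            mul_le_mul_left (ENNReal.rpow_le_rpow h.le (by linarith)) _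
        _ = g y ^ q := by
            rcases eq_or_ne (g y) 0 with h0 | h0
            · exfalso; rw [h0] at h; exact (not_lt.mpr (zero_le ..)) h
            rcases eq_or_ne (g y) ⊤ with h0' | h0'
            · rw [h0', ENNReal.top_rpow_of_pos (by linarith), top_mul_top,
                ENNReal.top_rpow_of_pos (by linarith)]
            have hh := ENNReal.rpow_add (q - 1) 1 h0 h0'
            rw [ENNReal.rpow_one] at hh
            rw [← hh]; norm_num
    · simp
  -- μ {A = ⊤} = 0
  have hAinf : μ {x | A x = ⊤} = 0 := by
    have hb : ∀ n : ℕ, μ {x | A x = ⊤} ≤ I * (((2:ℝ≥0∞) ^ q)⁻¹) ^ n := by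
      intro n
      have hn0 : ((2:ℝ≥0∞) ^ (n:ℤ)) ≠ 0 := (ENNReal.zpow_pos two_ne_zero ENNReal.ofNat_ne_top _).ne'
      have hntop : ((2:ℝ≥0∞) ^ (n:ℤ)) ≠ ⊤ := (ENNReal.zpow_lt_top two_ne_zero ENNReal.ofNat_ne_top _).ne
      have hsub : {x | A x = ⊤} ⊆ {x | 2 * (2:ℝ≥0∞) ^ (n:ℤ) < A x} := by
        intro x hx
        simp only [Set.mem_setOf_eq] at hx ⊢
        rw [hx]
        exact lt_top_iff_ne_top.mpr (ENNReal.mul_ne_top (by norm_num) hntop)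
      calc μ {x | A x = ⊤} ≤ μ {x | 2 * (2:ℝ≥0∞) ^ (n:ℤ) < A x} := measure_mono hsub
        _ ≤ (∫⁻ y, (if (2:ℝ≥0∞) ^ (n:ℤ) < g y then g y else 0) ∂μ) / (2:ℝ≥0∞) ^ (n:ℤ) :=
            weak_trunc_aux μ hη g hn0 hntop
        _ ≤ (((2:ℝ≥0∞) ^ (n:ℤ)) ^ (1 - q) * I) / (2:ℝ≥0∞) ^ (n:ℤ) :=
            ENNReal.div_le_div_right (htail _) _
        _ ≤ I * (((2:ℝ≥0∞) ^ q)⁻¹) ^ n := by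
            rw [ENNReal.div_eq_inv_mul]
            have h2 : ((2:ℝ≥0∞) ^ (n:ℤ))⁻¹ * ((2:ℝ≥0∞) ^ (n:ℤ)) ^ (1 - q) =
                (((2:ℝ≥0∞) ^ q)⁻¹) ^ n := by
              rw [← ENNReal.rpow_intCast (2:ℝ≥0∞) (n:ℤ), ← ENNReal.rpow_neg_one,
                ← ENNReal.rpow_mul, ← ENNReal.rpow_mul, ← ENNReal.rpow_add _ _ two_ne_zero ENNReal.ofNat_ne_top,
                ← ENNReal.rpow_neg_one, ← ENNReal.rpow_mul, ← ENNReal.rpow_natCast, ← ENNReal.rpow_mul]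
              congr 1
              push_cast
              ring
            rw [← mul_assoc, h2, mul_comm]
    rcases eq_or_ne (μ {x | A x = ⊤}) 0 with h | h
    · exact h
    exfalso
    have hlim : Tendsto (fun n : ℕ => I * (((2:ℝ≥0∞) ^ q)⁻¹) ^ n) atTop (nhds 0) := by
      have hr : ((2:ℝ≥0∞) ^ q)⁻¹ < 1 := by
        rw [ENNReal.inv_lt_one]
        exact ENNReal.one_lt_rpow one_lt_two (by linarith)
      have := ENNReal.Tendsto.const_mul (ENNReal.tendsto_pow_atTop_nhds_zero_of_lt_one hr)
        (Or.inr hfin)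
      simpa using this
    have hge := ge_of_tendsto' hlim hb
    exact h (le_antisymm hge (zero_le ..))
  -- main chain
  have hae : ∀ᵐ x ∂μ, A x ≠ ⊤ := by
    rw [ae_iff]
    simpa using hAinf
  set D : ℤ → Set X := fun k => {x | (2:ℝ≥0∞)^k ≤ A x ∧ A x < 2^(k+1)} with hD
  have hDmeas : ∀ k, MeasurableSet (D k) := fun k => hAmeas measurableSet_Ico
  have hif : ∀ j : ℤ, Measurable fun y => if (2:ℝ≥0∞)^j < g y then g y else 0 := fun j =>
    Measurable.ite (measurableSet_lt measurable_const hg) hg measurable_const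
  set F : ℤ → ℝ≥0∞ := fun j =>
    ((2:ℝ≥0∞)^j)^(q-1) * ∫⁻ y, (if (2:ℝ≥0∞)^j < g y then g y else 0) ∂μ with hF
  have hpt : ∀ᵐ x ∂μ, A x ^ q ≤
      ∑' k : ℤ, (D k).indicator (fun _ => ((2:ℝ≥0∞)^(k+1))^q) x := by
    filter_upwards [hae] with x hx
    rcases eq_or_ne (A x) 0 with h0 | h0
    · rw [h0, ENNReal.zero_rpow_of_pos (by linarith)]
      exact zero_le ..
    obtain ⟨k, hk1, hk2⟩ := ENNReal.exists_mem_Ico_zpow h0 hx one_lt_two ENNReal.ofNat_ne_top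
    have hmem : x ∈ D k := ⟨hk1, hk2⟩
    calc A x ^ q ≤ ((2:ℝ≥0∞)^(k+1))^q := ENNReal.rpow_le_rpow hk2.le (by linarith)
      _ = (D k).indicator (fun _ => ((2:ℝ≥0∞)^(k+1))^q) x := by
          rw [Set.indicator_of_mem hmem]
      _ ≤ _ := ENNReal.le_tsum k
  have coef : ∀ k : ℤ, ((2:ℝ≥0∞)^(k+1))^q =
      (2:ℝ≥0∞)^(3*q) * (((2:ℝ≥0∞)^(k-2))^(q-1) * (2:ℝ≥0∞)^(k-2)) := by
    intro k
    rw [← ENNReal.rpow_intCast 2 (k+1), ← ENNReal.rpow_intCast 2 (k-2), ← ENNReal.rpow_mul,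
      ← ENNReal.rpow_mul, ← ENNReal.rpow_add _ _ two_ne_zero ENNReal.ofNat_ne_top,
      ← ENNReal.rpow_add _ _ two_ne_zero ENNReal.ofNat_ne_top]
    congr 1
    push_cast
    ring
  calc ∫⁻ x, A x ^ q ∂μ
      ≤ ∫⁻ x, ∑' k : ℤ, (D k).indicator (fun _ => ((2:ℝ≥0∞)^(k+1))^q) x ∂μ :=
        lintegral_mono_ae hpt
    _ = ∑' k : ℤ, ∫⁻ x, (D k).indicator (fun _ => ((2:ℝ≥0∞)^(k+1))^q) x ∂μ :=
        lintegral_tsum fun k => (measurable_const.indicator (hDmeas k)).aemeasurable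
    _ = ∑' k : ℤ, ((2:ℝ≥0∞)^(k+1))^q * μ (D k) := by
        refine tsum_congr fun k => ?_
        rw [lintegral_indicator (hDmeas k), setLIntegral_const]
    _ ≤ ∑' k : ℤ, (2:ℝ≥0∞)^(3*q) * F (k - 2) := by
        refine ENNReal.tsum_le_tsum fun k => ?_
        have h20 : ((2:ℝ≥0∞) ^ (k-2)) ≠ 0 := (ENNReal.zpow_pos two_ne_zero ENNReal.ofNat_ne_top _).ne'
        have h2t : ((2:ℝ≥0∞) ^ (k-2)) ≠ ⊤ := (ENNReal.zpow_lt_top two_ne_zero ENNReal.ofNat_ne_top _).ne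
        have hDk : μ (D k) ≤
            (∫⁻ y, (if (2:ℝ≥0∞)^(k-2) < g y then g y else 0) ∂μ) / (2:ℝ≥0∞)^(k-2) := by
          refine le_trans (measure_mono ?_) (weak_trunc_aux μ hη g h20 h2t)
          intro x hx
          have hx1 : (2:ℝ≥0∞)^k ≤ A x := hx.1
          have hlt : 2 * (2:ℝ≥0∞)^(k-2) < (2:ℝ≥0∞)^k := by
            have e1 : 2 * (2:ℝ≥0∞)^(k-2) = (2:ℝ≥0∞)^(k-1) := by
              have := ENNReal.zpow_add two_ne_zero ENNReal.ofNat_ne_top 1 (k-2)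
              rw [show (1:ℤ) + (k-2) = k - 1 by ring] at this
              rw [this, zpow_one]
            have e2 : (2:ℝ≥0∞)^(k-1) < (2:ℝ≥0∞)^k := by
              have h0 : ((2:ℝ≥0∞) ^ (k-1)) ≠ 0 := (ENNReal.zpow_pos two_ne_zero ENNReal.ofNat_ne_top _).ne'
              have ht : ((2:ℝ≥0∞) ^ (k-1)) ≠ ⊤ := (ENNReal.zpow_lt_top two_ne_zero ENNReal.ofNat_ne_top _).ne
              have := ENNReal.zpow_add two_ne_zero ENNReal.ofNat_ne_top (k-1) 1
              rw [show k - 1 + 1 = k by ring] at this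
              rw [this, zpow_one]
              calc (2:ℝ≥0∞)^(k-1) = (2:ℝ≥0∞)^(k-1) * 1 := (mul_one _).symm
                _ < (2:ℝ≥0∞)^(k-1) * 2 := by
                    rw [ENNReal.mul_lt_mul_iff_right h0 ht]
                    exact one_lt_two
            rw [e1]; exact e2
          exact lt_of_lt_of_le hlt hx1
        calc ((2:ℝ≥0∞)^(k+1))^q * μ (D k)
            ≤ ((2:ℝ≥0∞)^(k+1))^q *
              ((∫⁻ y, (if (2:ℝ≥0∞)^(k-2) < g y then g y else 0) ∂μ) / (2:ℝ≥0∞)^(k-2)) :=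
              mul_le_mul_right hDk _
          _ = (2:ℝ≥0∞)^(3*q) * (((2:ℝ≥0∞)^(k-2))^(q-1) *
              ((2:ℝ≥0∞)^(k-2) *
                ((∫⁻ y, (if (2:ℝ≥0∞)^(k-2) < g y then g y else 0) ∂μ) / (2:ℝ≥0∞)^(k-2)))) := by
              rw [coef k]; ring
          _ ≤ (2:ℝ≥0∞)^(3*q) * F (k - 2) := by
              show _ ≤ (2:ℝ≥0∞)^(3*q) * (((2:ℝ≥0∞)^(k-2))^(q-1) *
                ∫⁻ y, (if (2:ℝ≥0∞)^(k-2) < g y then g y else 0) ∂μ)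
              gcongr
              exact ENNReal.mul_div_le
    _ = (2:ℝ≥0∞)^(3*q) * ∑' k : ℤ, F (k - 2) := ENNReal.tsum_mul_left
    _ = (2:ℝ≥0∞)^(3*q) * ∑' j : ℤ, F j := by
        congr 1
        exact (Equiv.subRight (2:ℤ)).tsum_eq F
    _ ≤ (2:ℝ≥0∞)^(3*q) * ((1 - ((2:ℝ≥0∞)^(q-1))⁻¹)⁻¹ * I) := by
        refine mul_le_mul_right ?_ _
        have hswap : ∑' j : ℤ, F j =
            ∫⁻ x, ∑' j : ℤ, ((2:ℝ≥0∞)^j)^(q-1) * (if (2:ℝ≥0∞)^j < g x then g x else 0) ∂μ := by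
          rw [lintegral_tsum fun j => ((hif j).const_mul _).aemeasurable]
          refine tsum_congr fun j => ?_
          rw [hF, lintegral_const_mul _ (hif j)]
        rw [hswap]
        calc ∫⁻ x, ∑' j : ℤ, ((2:ℝ≥0∞)^j)^(q-1) * (if (2:ℝ≥0∞)^j < g x then g x else 0) ∂μ
            ≤ ∫⁻ x, (1 - ((2:ℝ≥0∞)^(q-1))⁻¹)⁻¹ * g x ^ q ∂μ :=
              lintegral_mono fun x => geom_sum_bound_aux hq (g x)
          _ = (1 - ((2:ℝ≥0∞)^(q-1))⁻¹)⁻¹ * I := lintegral_const_mul _ (hg.pow_const q)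
    _ = (2:ℝ≥0∞)^(3*q) * (1 - ((2:ℝ≥0∞)^(q-1))⁻¹)⁻¹ * I := (mul_assoc _ _ _).symm


end
end AuxStatement17

/-- the maximal operator `M_{r,(η)}` is bounded on `L^p(μ)`. -/
theorem statement17 (X : Type*) [MetricSpace X] [MeasurableSpace X] [BorelSpace X]
    (μ : MeasureTheory.Measure X) (H : NonHomSpace X μ)
    (p r η : ℝ) (hp : 1 < p) (hr : 1 < r) (hrp : r < p) (hη : 5 ≤ η) :
    ∃ C : ℝ, 0 < C ∧
      ∀ f : X → ℝ, MeasureTheory.MemLp f (ENNReal.ofReal p) μ →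
        (∫⁻ x, Mmax μ r η f x ^ p ∂μ) ^ (1 / p) ≤
          ENNReal.ofReal C * MeasureTheory.eLpNorm f (ENNReal.ofReal p) μ := by
  have hr0 : (0:ℝ) < r := by linarith
  have hp0 : (0:ℝ) < p := by linarith
  set q : ℝ := p / r with hqdef
  have hq : 1 < q := (one_lt_div hr0).mpr hrp
  set K : ℝ≥0∞ := (2 : ℝ≥0∞) ^ (3 * q) * (1 - ((2 : ℝ≥0∞) ^ (q - 1))⁻¹)⁻¹ with hK
  have ha1 : (1:ℝ≥0∞) < (2 : ℝ≥0∞) ^ (q - 1) :=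
    ENNReal.one_lt_rpow one_lt_two (by linarith)
  have hK0 : K ≠ 0 := by
    apply mul_ne_zero
    · simp [ENNReal.rpow_eq_zero_iff]
    · simp only [ne_eq, ENNReal.inv_eq_zero]
      exact ne_top_of_le_ne_top one_ne_top tsub_le_self
  have hKT : K ≠ ⊤ := by
    apply ENNReal.mul_ne_top
    · exact ENNReal.rpow_ne_top_of_nonneg (by positivity) (by norm_num)
    · rw [ENNReal.inv_ne_top]
      rw [ne_eq, tsub_eq_zero_iff_le, not_le]
      exact ENNReal.inv_lt_one.mpr ha1
  have hKrT : K ^ (1/p) ≠ ⊤ := (ENNReal.rpow_lt_top_of_nonneg (by positivity) hKT).ne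
  refine ⟨(K ^ (1/p)).toReal, ?_, ?_⟩
  · exact ENNReal.toReal_pos (by simp [ENNReal.rpow_eq_zero_iff, hK0, hKT]) hKrT
  intro f hf
  -- measurable representative
  set f' : X → ℝ := (hf.1).mk f with hf'
  have hf'm : Measurable f' := (hf.1).stronglyMeasurable_mk.measurable
  have hff' : f =ᵐ[μ] f' := (hf.1).ae_eq_mk
  set g : X → ℝ≥0∞ := fun y => ENNReal.ofReal (|f' y| ^ r) with hg
  have hgm : Measurable g :=
    ENNReal.measurable_ofReal.comp ((Real.continuous_rpow_const hr0.le).measurable.comp hf'm.abs)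
  set ν : Measure X := μ.withDensity g with hν
  have hg₀g : (fun y => ENNReal.ofReal (|f y| ^ r)) =ᵐ[μ] g := by
    filter_upwards [hff'] with y hy
    rw [hg]; simp only; rw [hy]
  -- Mmax in terms of MRaux
  have h1r : (0:ℝ) < 1 / r := by positivity
  have hMmax : ∀ x, Mmax μ r η f x = MRaux μ ν η x ^ (1 / r) := by
    intro x
    have e1 : Mmax μ r η f x = ⨆ (c : X) (rad : ℝ) (_ : 0 < rad) (_ : x ∈ ball c rad),
        (ν (ball c rad) / μ (ball c (η * rad))) ^ (1 / r) := by
      unfold Mmax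
      refine iSup_congr fun c => iSup_congr fun rad => iSup_congr fun hrad =>
        iSup_congr fun hx => ?_
      congr 2
      rw [hν, withDensity_apply _ measurableSet_ball]
      exact lintegral_congr_ae (ae_restrict_of_ae hg₀g)
    rw [e1, MRaux, iSup_rpow_aux _ h1r]
    refine iSup_congr fun c => ?_
    rw [iSup_rpow_aux _ h1r]
    refine iSup_congr fun rad => ?_
    rw [iSup_rpow_aux _ h1r]
    refine iSup_congr fun hrad => ?_
    rw [iSup_rpow_aux _ h1r]
  have hpow : ∀ x, Mmax μ r η f x ^ p = MRaux μ ν η x ^ q := by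
    intro x
    rw [hMmax x, ← ENNReal.rpow_mul]
    congr 1
    rw [one_div, inv_mul_eq_div]
  -- identify ∫ g^q with the p-th power of the Lp norm
  set J : ℝ≥0∞ := ∫⁻ x, (‖f' x‖₊ : ℝ≥0∞) ^ p ∂μ with hJ
  have hgq : ∀ y, g y ^ q = (‖f' y‖₊ : ℝ≥0∞) ^ p := by
    intro y
    rw [hg]
    simp only
    rw [ENNReal.ofReal_rpow_of_nonneg (by positivity) (by positivity)]
    have hrq : (|f' y| ^ r) ^ q = |f' y| ^ p := by
      rw [← Real.rpow_mul (abs_nonneg _)]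
      congr 1
      rw [hqdef]
      field_simp
    rw [hrq, ← Real.norm_eq_abs, ← ENNReal.ofReal_rpow_of_nonneg (norm_nonneg _) hp0.le,
      ofReal_norm]; rfl
  have hintg : ∫⁻ x, g x ^ q ∂μ = J := by
    rw [hJ]
    exact lintegral_congr fun x => hgq x
  have hLp : eLpNorm f (ENNReal.ofReal p) μ = J ^ (1/p) := by
    rw [eLpNorm_congr_ae hff',
      eLpNorm_eq_lintegral_rpow_enorm_toReal (by simp [ENNReal.ofReal_eq_zero]; linarith)
        ENNReal.ofReal_ne_top,
      ENNReal.toReal_ofReal hp0.le]; rfl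
  have hJfin : J ≠ ⊤ := by
    have hE : eLpNorm f (ENNReal.ofReal p) μ ≠ ⊤ := hf.2.ne
    have : J = eLpNorm f (ENNReal.ofReal p) μ ^ p := by
      rw [hLp, ← ENNReal.rpow_mul, one_div, inv_mul_cancel₀ hp0.ne', ENNReal.rpow_one]
    rw [this]
    exact (ENNReal.rpow_lt_top_of_nonneg hp0.le hE).ne
  -- apply the strong-type bound
  have hstrong := strong_aux μ hη hq g hgm (by rw [hintg]; exact hJfin)
  rw [hintg] at hstrong
  calc (∫⁻ x, Mmax μ r η f x ^ p ∂μ) ^ (1 / p)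
      = (∫⁻ x, MRaux μ ν η x ^ q ∂μ) ^ (1 / p) := by
        rw [lintegral_congr fun x => hpow x]
    _ ≤ (K * J) ^ (1 / p) := ENNReal.rpow_le_rpow hstrong (by positivity)
    _ = K ^ (1 / p) * J ^ (1 / p) := ENNReal.mul_rpow_of_nonneg _ _ (by positivity)
    _ = K ^ (1 / p) * eLpNorm f (ENNReal.ofReal p) μ := by rw [hLp]
    _ = ENNReal.ofReal (K ^ (1/p)).toReal * eLpNorm f (ENNReal.ofReal p) μ := by
        rw [ENNReal.ofReal_toReal hKrT]
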